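/- Let n ≥ 1, let μ = (-1)^n, and let Δ_n be the n×n complex matrix with (i,j) entry μ^i·(−μ)^{j−1}·C(j−1, n−i) for 1 ≤ i, j ≤ n. Then Δ_nᵀ = −Δ_n · J_n(μ)^n. -/

import Mathlib

open Matrix BigOperators Finset

noncomputable section

/-- The `n × n` upper-triangular Jordan block with eigenvalue `μ`:
`μ` on the diagonal, `1` on the first superdiagonal, `0` elsewhere. -/
def Jmat (n : ℕ) (μ : ℂ) : Matrix (Fin n) (Fin n) ℂ :=
  Matrix.of fun i j => if i = j then μ else if (j : ℕ) = (i : ℕ) + 1 then 1 else 0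

/-- The Pascal-type matrix `Δ_n`, whose 1-based `(i,j)` entry is
`μ^i * (−μ)^(j−1) * C(j−1, n−i)` (here indices are 0-based, so shifted by one). -/
def Delta (n : ℕ) (μ : ℂ) : Matrix (Fin n) (Fin n) ℂ :=
  Matrix.of fun i j =>
    μ ^ ((i : ℕ) + 1) * (-μ) ^ (j : ℕ) * ((j : ℕ).choose (n - ((i : ℕ) + 1)) : ℂ)

/-- The `2n × 2n` block matrix `H_{2n}(μ) = [[0, I],[J_n(μ), 0]]`. -/
def Hmat (n : ℕ) (μ : ℂ) : Matrix (Fin n ⊕ Fin n) (Fin n ⊕ Fin n) ℂ :=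
  Matrix.fromBlocks 0 1 (Jmat n μ) 0

/-- The `n × n` reversed identity matrix: `1` on the antidiagonal, `0` elsewhere. -/
def Rev (n : ℕ) : Matrix (Fin n) (Fin n) ℂ :=
  Matrix.of fun i j => if j = i.rev then 1 else 0

/-!
Entrywise, `J_n(μ)^n` has `(k, j)` entry `C(n, j - k) μ^(n - j + k)` for `k ≤ j`, so when
`μ² = 1` the `(i, j)` entry of `Δ_n J_n(μ)^n` is `±∑_k (-1)^k C(k, a) C(n, j - k)` with
`a = n - 1 - i`. By the generating function
`∑_k (-1)^k C(k, a) x^k = (-1)^a x^a / (1 + x)^(a + 1)`, this sum is the coefficient of `x^j`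
in `(-1)^a x^a (1 + x)^(n - 1 - a)`, namely `(-1)^a C(i, n - 1 - j)`, which is `Δ_n(j, i)` up to
a sign. For `μ = (-1)^n` the signs agree.
-/

open PowerSeries

section Binomial

variable {R : Type*} [CommRing R]

theorem PowerSeries.coeff_one_add_X_pow (m q : ℕ) :
    coeff q ((1 + X : R⟦X⟧) ^ m) = m.choose q := by
  rw [← Polynomial.coe_X, ← Polynomial.coe_one, ← Polynomial.coe_add, ← Polynomial.coe_pow,
    Polynomial.coeff_coe, Polynomial.coeff_one_add_X_pow]

theorem PowerSeries.mk_neg_one_pow_mul_choose_mul_one_add_X_pow (a : ℕ) :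
    (mk fun k => (-1 : R) ^ k * k.choose a) * (1 + X) ^ (a + 1) = (-1) ^ a * X ^ a := by
  have hmk : (mk fun k => (-1 : R) ^ k * k.choose a) =
      (-1) ^ a * X ^ a * rescale (-1) (mk fun m => ((a + m).choose a : R)) := by
    ext k
    rw [mul_assoc, show (-1 : R⟦X⟧) ^ a = C ((-1) ^ a) by simp, coeff_C_mul, coeff_X_pow_mul',
      coeff_mk]
    split_ifs with hk
    · rw [coeff_rescale, coeff_mk, Nat.add_sub_cancel' hk, ← mul_assoc, ← pow_add,
        ← Nat.add_sub_assoc hk, Nat.add_sub_cancel_left]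
    · simp [Nat.choose_eq_zero_of_lt (not_le.mp hk)]
  have hpow : (1 + X : R⟦X⟧) ^ (a + 1) = rescale (-1) ((1 - X) ^ (a + 1)) := by
    rw [map_pow, map_sub, map_one, rescale_neg_one_X, sub_neg_eq_add]
  rw [hmk, hpow, mul_assoc, ← map_mul, mk_add_choose_mul_one_sub_pow_eq_one, map_one, mul_one]

theorem sum_range_neg_one_pow_mul_choose_mul_choose {a n j : ℕ} (ha : a < n) (hj : j < n) :
    ∑ k ∈ range (j + 1), (-1 : R) ^ k * k.choose a * n.choose (j - k) =
      (-1) ^ a * (n - 1 - a).choose (n - 1 - j) := by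
  have hseries : (mk fun k => (-1 : R) ^ k * k.choose a) * (1 + X) ^ n =
      C ((-1) ^ a) * (X ^ a * (1 + X) ^ (n - 1 - a)) := by
    rw [← Nat.add_sub_of_le ha, pow_add, ← mul_assoc,
      mk_neg_one_pow_mul_choose_mul_one_add_X_pow]
    simp [mul_assoc]
  have hcoeff := congrArg (coeff j) hseries
  rw [coeff_mul, Nat.sum_antidiagonal_eq_sum_range_succ_mk, coeff_C_mul, coeff_X_pow_mul'] at hcoeff
  simp only [coeff_mk, coeff_one_add_X_pow] at hcoeff
  rw [hcoeff]
  congr 1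
  split_ifs with haj
  · rw [← Nat.choose_symm (by omega), show n - 1 - a - (j - a) = n - 1 - j by omega]
  · rw [Nat.choose_eq_zero_of_lt (by omega), Nat.cast_zero]

end Binomial

theorem Nat.choose_succ_succ_mul_pow {R : Type*} [CommSemiring R] (μ : R) (t d : ℕ) :
    ((t + 1).choose (d + 1) : R) * μ ^ (t + 1 - (d + 1)) =
      μ * (t.choose (d + 1) * μ ^ (t - (d + 1))) + t.choose d * μ ^ (t - d) := by
  rw [Nat.choose_succ_succ', Nat.cast_add, add_mul, Nat.add_sub_add_right]
  rcases lt_trichotomy d t with hdt | rfl | htd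
  · rw [show t - d = t - (d + 1) + 1 by omega, pow_succ]
    ring
  · simp
  · simp [Nat.choose_eq_zero_of_lt htd, Nat.choose_eq_zero_of_lt (htd.trans (Nat.lt_succ_self d))]

theorem mul_Jmat_apply {n : ℕ} (μ : ℂ) (M : Matrix (Fin n) (Fin n) ℂ) (i j : Fin n) :
    (M * Jmat n μ) i j =
      μ * M i j + if h : 0 < (j : ℕ) then M i ⟨j - 1, by omega⟩ else 0 := by
  have hJ : ∀ k,
      Jmat n μ k j = (if k = j then μ else 0) + if (j : ℕ) = k + 1 then 1 else 0 := by
    intro k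
    by_cases hkj : k = j <;> simp [Jmat, hkj]
  simp only [mul_apply, hJ, mul_add, sum_add_distrib, mul_ite, mul_zero, mul_one,
    sum_ite_eq', mem_univ, if_true, mul_comm (M i j)]
  congr 1
  split_ifs with hj
  · rw [sum_eq_single_of_mem ⟨j - 1, by omega⟩ (mem_univ _), if_pos (by simp; omega)]
    intro k _ hk
    exact if_neg fun h => hk (Fin.ext (by simp; omega))
  · exact sum_eq_zero fun k _ => if_neg (by omega)

theorem Jmat_pow_apply {n : ℕ} (μ : ℂ) (t : ℕ) (i j : Fin n) :
    (Jmat n μ ^ t) i j =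
      if (i : ℕ) ≤ j then (t.choose (j - i) : ℂ) * μ ^ (t - (j - i)) else 0 := by
  induction t generalizing j with
  | zero =>
    rcases eq_or_ne i j with rfl | hij
    · simp
    · have hij' : (i : ℕ) ≠ j := Fin.val_ne_of_ne hij
      rw [pow_zero, one_apply_ne hij]
      split_ifs with hle
      · rw [Nat.choose_eq_zero_of_lt (by omega : 0 < (j : ℕ) - i), Nat.cast_zero, zero_mul]
      · rfl
  | succ t ih =>
    rw [pow_succ, mul_Jmat_apply, ih]
    rcases lt_or_ge (i : ℕ) j with hij | hji
    · obtain ⟨d, hd⟩ : ∃ d, (j : ℕ) - i = d + 1 := ⟨j - i - 1, by omega⟩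
      rw [dif_pos (by omega), ih, if_pos hij.le, if_pos (by simp; omega), if_pos (by simp; omega),
        hd, Nat.choose_succ_succ_mul_pow, show (j : ℕ) - 1 - i = d by omega]
    · have hprev :
          (if h : 0 < (j : ℕ) then (Jmat n μ ^ t) i ⟨j - 1, by omega⟩ else 0) = 0 :=
        dite_eq_right_iff.2 fun _ => by rw [ih, if_neg (by simp; omega)]
      rw [hprev, add_zero]
      split_ifs with hij
      · simp [show (j : ℕ) - i = 0 by omega, pow_succ']
      · exact mul_zero μ

theorem Delta_mul_Jmat_pow_apply {n : ℕ} {μ : ℂ} (hμ : μ ^ 2 = 1) (i j : Fin n) :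
    (Delta n μ * Jmat n μ ^ n) i j =
      μ ^ ((i : ℕ) + 1) * μ ^ (n - j) *
        ((-1) ^ (n - ((i : ℕ) + 1)) * (i : ℕ).choose (n - ((j : ℕ) + 1))) := by
  set a := n - ((i : ℕ) + 1)
  set c := μ ^ ((i : ℕ) + 1) * μ ^ (n - j)
  let f : ℕ → ℂ := fun k =>
    if k ≤ j then c * ((-1) ^ k * k.choose a * n.choose (j - k)) else 0
  have hterm : ∀ k : Fin n, Delta n μ i k * (Jmat n μ ^ n) k j = f k := by
    intro k
    dsimp only [f]
    rw [Jmat_pow_apply, Delta, of_apply, mul_ite, mul_zero]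
    split_ifs with hkj
    · have hsq : μ ^ (k : ℕ) * μ ^ (k : ℕ) = 1 := by rw [← mul_pow, ← sq, hμ, one_pow]
      rw [show n - ((j : ℕ) - k) = n - j + k by omega, pow_add, neg_pow]
      linear_combination c * (-1) ^ (k : ℕ) * (k : ℕ).choose a * n.choose (j - k) * hsq
    · rfl
  calc ∑ k, Delta n μ i k * (Jmat n μ ^ n) k j
      = ∑ k ∈ range n, f k :=
        (Fintype.sum_congr _ _ hterm).trans (Fin.sum_univ_eq_sum_range f n)
    _ = ∑ k ∈ range (j + 1), c * ((-1) ^ k * k.choose a * n.choose (j - k)) := by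
        rw [← sum_filter]
        congr 1
        ext k
        simp only [mem_filter, mem_range]
        omega
    _ = c * ((-1) ^ a * (i : ℕ).choose (n - ((j : ℕ) + 1))) := by
        rw [← mul_sum, sum_range_neg_one_pow_mul_choose_mul_choose (by omega) j.isLt,
          show n - 1 - a = i by omega, show n - 1 - j = n - ((j : ℕ) + 1) by omega]

theorem stmt_4_general (n : ℕ) (μ : ℂ) (hμ : μ = (-1) ^ n) :
    (Delta n μ)ᵀ = -(Delta n μ * (Jmat n μ) ^ n) := by
  have hμ2 : μ ^ 2 = 1 := by rw [hμ, ← pow_mul, pow_mul', neg_one_sq, one_pow]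
  ext i j
  have hsign : μ ^ ((j : ℕ) + 1) * (-μ) ^ (i : ℕ) =
      -(μ ^ ((i : ℕ) + 1) * μ ^ (n - j) * (-1) ^ (n - ((i : ℕ) + 1))) := by
    subst hμ
    simp only [neg_pow ((-1 : ℂ) ^ n), ← pow_mul, ← pow_add]
    rw [← neg_one_mul ((-1 : ℂ) ^ _), ← pow_succ']
    apply neg_one_pow_congr
    simp only [Nat.even_add, Nat.even_mul, Nat.even_sub j.isLt.le, Nat.even_sub i.isLt,
      Nat.even_add_one]
    tauto
  rw [transpose_apply, neg_apply, Delta_mul_Jmat_pow_apply hμ2, Delta, of_apply, hsign]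
  ring

/-- `Δ_nᵀ = −Δ_n · J_n(μ)^n` when `μ = (-1)^n`. -/
theorem stmt_4 (n : ℕ) (hn : 1 ≤ n) (μ : ℂ) (hμ : μ = (-1) ^ n) :
    (Delta n μ)ᵀ = -(Delta n μ * (Jmat n μ) ^ n) :=
  stmt_4_general n μ hμ
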